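/- arXiv:math/0307262 — 3 statements merged into one kernel-verified Lean document; each statement's English description precedes it below -/
import Mathlib

section
/- Let n be a positive integer and 0 < α < n. Then there exists a constant c > 0 such that the function u(x) = c |x|^{−(n−α)/2} satisfies the critical integral equation u(x) = ∫_{ℝⁿ} |x−y|^{−(n−α)} u(y)^{(n+α)/(n−α)} dy for every x ≠ 0. -/
/-!
For `0 ≤ a, b < n < a + b` and `x ≠ 0` the integral `I(x) = ∫ |x - y|^{-a} |y|^{-b} dy`
converges: near `0` and near `x` one factor is bounded and the other is locally integrable, and
away from both points the integrand is `O(|y|^{-(a+b)})`. Dilation and rotation invariance of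
Lebesgue measure give `I(x) = K |x|^{n-a-b}` with `K = I(e) > 0` for a unit vector `e`.
Hence for `u = c |x|^{-s}` the right-hand side of `u = |·|^{-a} * u^p` is `c^p K |x|^{n-a-sp}`;
when `n - a - sp = -s` the equation reduces to `c^p K = c`. The critical equation is the case
`a = n - α`, `s = (n - α)/2`, `p = (n + α)/(n - α)`.
-/

open MeasureTheory Metric Set Module Filter

section HaarMeasure

variable {E : Type*} [NormedAddCommGroup E] [NormedSpace ℝ E] [FiniteDimensional ℝ E]
  [MeasurableSpace E] [BorelSpace E] {μ : Measure E} [μ.IsAddHaarMeasure]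

lemma integrableOn_compl_ball_norm_rpow_neg {t R : ℝ} (ht : (finrank ℝ E : ℝ) < t)
    (hR : 0 < R) : IntegrableOn (fun x : E => ‖x‖ ^ (-t)) (ball 0 R)ᶜ μ := by
  have ht0 : 0 ≤ t := (Nat.cast_nonneg _).trans ht.le
  refine (((integrable_one_add_norm ht).const_mul ((1 + R⁻¹) ^ t)).integrableOn).mono'
    (Measurable.aestronglyMeasurable (by fun_prop)) ?_
  filter_upwards [ae_restrict_mem measurableSet_ball.compl] with x hx
  have hRx : R ≤ ‖x‖ := by simpa using hx
  have hx0 : 0 < ‖x‖ := hR.trans_le hRx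
  have hle : ‖x‖⁻¹ ≤ (1 + R⁻¹) / (1 + ‖x‖) := by
    rw [inv_eq_one_div, div_le_div_iff₀ hx0 (by positivity)]
    have : 1 ≤ R⁻¹ * ‖x‖ := by rwa [← div_eq_inv_mul, one_le_div hR]
    linarith
  calc ‖‖x‖ ^ (-t)‖ = (‖x‖⁻¹) ^ t := by
        rw [Real.norm_of_nonneg (by positivity), Real.rpow_neg hx0.le, Real.inv_rpow hx0.le]
    _ ≤ ((1 + R⁻¹) / (1 + ‖x‖)) ^ t := by gcongr
    _ = (1 + R⁻¹) ^ t * (1 + ‖x‖) ^ (-t) := by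
        rw [Real.div_rpow (by positivity) (by positivity), Real.rpow_neg (by positivity),
          div_eq_mul_inv]

variable {a b : ℝ}

lemma integrableOn_ball_zero_norm_sub_rpow_mul_norm_rpow (ha : 0 ≤ a) (hb : 0 ≤ b)
    (hbE : b < finrank ℝ E) (x : E) :
    IntegrableOn (fun y => ‖x - y‖ ^ (-a) * ‖y‖ ^ (-b)) (ball 0 (‖x‖ / 2)) μ := by
  have hE : 0 < finrank ℝ E := by exact_mod_cast hb.trans_lt hbE
  refine integrableOn_ball_of_norm_le_rpow (C := (‖x‖ / 2) ^ (-a)) hE hbE ?_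
    (Measurable.aestronglyMeasurable (by fun_prop))
  filter_upwards [ae_restrict_mem measurableSet_ball] with y hy
  have hy : ‖y‖ < ‖x‖ / 2 := by simpa using hy
  have hxy : ‖x‖ / 2 ≤ ‖x - y‖ := by linarith [norm_sub_norm_le x y]
  rw [Real.norm_of_nonneg (by positivity)]
  exact mul_le_mul_of_nonneg_right
    (Real.rpow_le_rpow_of_nonpos ((norm_nonneg y).trans_lt hy) hxy (neg_nonpos.mpr ha))
    (by positivity)

lemma integrableOn_ball_norm_sub_rpow_mul_norm_rpow (ha : 0 ≤ a) (hb : 0 ≤ b)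
    (haE : a < finrank ℝ E) (x : E) :
    IntegrableOn (fun y => ‖x - y‖ ^ (-a) * ‖y‖ ^ (-b)) (ball x (‖x‖ / 2)) μ := by
  -- `y ↦ x - y` swaps the two singularities
  have hpre : (x - ·) ⁻¹' ball x (‖x‖ / 2) = ball 0 (‖x‖ / 2) := by
    ext y; simp
  rw [← (Measure.measurePreserving_sub_left μ x).integrableOn_comp_preimage
    (MeasurableEquiv.subLeft x).measurableEmbedding, hpre]
  refine (integrableOn_ball_zero_norm_sub_rpow_mul_norm_rpow hb ha haE x).congr_fun
    (fun y _ => ?_) measurableSet_ball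
  simp [mul_comm]

lemma integrableOn_compl_balls_norm_sub_rpow_mul_norm_rpow (ha : 0 ≤ a)
    (hab : finrank ℝ E < a + b) {x : E} (hx : x ≠ 0) :
    IntegrableOn (fun y => ‖x - y‖ ^ (-a) * ‖y‖ ^ (-b))
      (ball 0 (‖x‖ / 2) ∪ ball x (‖x‖ / 2))ᶜ μ := by
  have hm : 0 < ‖x‖ / 2 := by positivity
  refine (((integrableOn_compl_ball_norm_rpow_neg hab hm).mono_set
    (compl_subset_compl.mpr subset_union_left)).const_mul (3 ^ a)).mono'
    (Measurable.aestronglyMeasurable (by fun_prop)) ?_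
  filter_upwards [ae_restrict_mem (measurableSet_ball.union measurableSet_ball).compl] with y hy
  simp only [mem_compl_iff, mem_union, mem_ball, dist_zero_right, not_or, not_lt] at hy
  obtain ⟨hy0, hyx⟩ := hy
  rw [dist_eq_norm, norm_sub_rev] at hyx
  -- `‖y‖ ≤ ‖x - y‖ + ‖x‖ ≤ 3 ‖x - y‖`
  have hy3 : ‖y‖ / 3 ≤ ‖x - y‖ := by linarith [norm_sub_norm_le y x, norm_sub_rev y x]
  have hy : 0 < ‖y‖ := hm.trans_le hy0
  calc ‖‖x - y‖ ^ (-a) * ‖y‖ ^ (-b)‖ = ‖x - y‖ ^ (-a) * ‖y‖ ^ (-b) :=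
        Real.norm_of_nonneg (by positivity)
    _ ≤ (‖y‖ / 3) ^ (-a) * ‖y‖ ^ (-b) :=
        mul_le_mul_of_nonneg_right
          (Real.rpow_le_rpow_of_nonpos (by positivity) hy3 (neg_nonpos.mpr ha)) (by positivity)
    _ = 3 ^ a * ‖y‖ ^ (-(a + b)) := by
        rw [Real.div_rpow hy.le (by norm_num), Real.rpow_neg (by norm_num : (0:ℝ) ≤ 3),
          div_inv_eq_mul, neg_add, Real.rpow_add hy]
        ring

lemma integrable_norm_sub_rpow_mul_norm_rpow (ha : 0 ≤ a) (hb : 0 ≤ b) (haE : a < finrank ℝ E)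
    (hbE : b < finrank ℝ E) (hab : finrank ℝ E < a + b) {x : E} (hx : x ≠ 0) :
    Integrable (fun y => ‖x - y‖ ^ (-a) * ‖y‖ ^ (-b)) μ := by
  rw [← integrableOn_univ, ← union_compl_self (ball 0 (‖x‖ / 2) ∪ ball x (‖x‖ / 2))]
  exact ((integrableOn_ball_zero_norm_sub_rpow_mul_norm_rpow ha hb hbE x).union
    (integrableOn_ball_norm_sub_rpow_mul_norm_rpow ha hb haE x)).union
    (integrableOn_compl_balls_norm_sub_rpow_mul_norm_rpow ha hab hx)

end HaarMeasure

lemma integral_norm_sub_rpow_mul_norm_rpow_pos {E : Type*} [NormedAddCommGroup E]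
    [NormedSpace ℝ E] [MeasurableSpace E] {μ : Measure E} [μ.IsOpenPosMeasure] {a b : ℝ}
    {e : E} (he : e ≠ 0) (hint : Integrable (fun z => ‖e - z‖ ^ (-a) * ‖z‖ ^ (-b)) μ) :
    0 < ∫ z, ‖e - z‖ ^ (-a) * ‖z‖ ^ (-b) ∂μ := by
  rw [integral_pos_iff_support_of_nonneg (fun z => by positivity) hint]
  have hopen : IsOpen ({e, 0} : Set E)ᶜ := (toFinite _).isClosed.isOpen_compl
  have hneg : -e ∈ ({e, 0} : Set E)ᶜ := by
    simp [he, neg_eq_iff_add_eq_zero, ← two_smul ℝ e]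
  refine (hopen.measure_pos μ ⟨-e, hneg⟩).trans_le (measure_mono fun z hz => ?_)
  simp only [mem_compl_iff, mem_insert_iff, mem_singleton_iff, not_or] at hz
  exact (mul_pos (Real.rpow_pos_of_pos (norm_pos_iff.mpr (sub_ne_zero.mpr (Ne.symm hz.1))) _)
    (Real.rpow_pos_of_pos (norm_pos_iff.mpr hz.2) _)).ne'

lemma integral_norm_sub_rpow_mul_norm_rpow_eq {E : Type*} [NormedAddCommGroup E]
    [InnerProductSpace ℝ E] [FiniteDimensional ℝ E] [MeasurableSpace E] [BorelSpace E]
    (a b : ℝ) {e x : E} (he : ‖e‖ = 1) (hx : x ≠ 0) :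
    ∫ y, ‖x - y‖ ^ (-a) * ‖y‖ ^ (-b) =
      ‖x‖ ^ ((finrank ℝ E : ℝ) - a - b) * ∫ z, ‖e - z‖ ^ (-a) * ‖z‖ ^ (-b) := by
  set r := ‖x‖
  have hr : 0 < r := norm_pos_iff.mpr hx
  set T := Submodule.reflection (ℝ ∙ (e - r⁻¹ • x))ᗮ
  have hTe : r • T e = x := by
    rw [Submodule.reflection_sub
        (by rw [he, norm_smul, norm_inv, norm_norm, inv_mul_cancel₀ hr.ne']),
      smul_inv_smul₀ hr.ne']
  have hTz : ∀ z, ‖x - r • T z‖ ^ (-a) * ‖r • T z‖ ^ (-b) =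
      r ^ (-(a + b)) * (‖e - z‖ ^ (-a) * ‖z‖ ^ (-b)) := fun z => by
    rw [← hTe, ← smul_sub, ← map_sub, norm_smul, norm_smul, T.norm_map, T.norm_map, norm_norm,
      Real.mul_rpow hr.le (norm_nonneg _), Real.mul_rpow hr.le (norm_nonneg _), neg_add,
      Real.rpow_add hr]
    ring
  calc ∫ y, ‖x - y‖ ^ (-a) * ‖y‖ ^ (-b)
      = r ^ finrank ℝ E * ∫ z, ‖x - r • z‖ ^ (-a) * ‖r • z‖ ^ (-b) := by
        rw [Measure.integral_comp_smul_of_nonneg volume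
          (fun y => ‖x - y‖ ^ (-a) * ‖y‖ ^ (-b)) r (hR := hr.le), smul_eq_mul,
          mul_inv_cancel_left₀ (pow_ne_zero _ hr.ne')]
    _ = r ^ finrank ℝ E * ∫ z, ‖x - r • T z‖ ^ (-a) * ‖r • T z‖ ^ (-b) := by
        rw [T.measurePreserving.integral_comp T.toHomeomorph.measurableEmbedding
          (fun w => ‖x - r • w‖ ^ (-a) * ‖r • w‖ ^ (-b))]
    _ = r ^ ((finrank ℝ E : ℝ) - a - b) * ∫ z, ‖e - z‖ ^ (-a) * ‖z‖ ^ (-b) := by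
        simp_rw [hTz, integral_const_mul, ← mul_assoc, ← Real.rpow_natCast,
          ← Real.rpow_add hr]
        ring_nf

lemma exists_pos_const_mul_norm_rpow_eq_integral {E : Type*} [NormedAddCommGroup E]
    [InnerProductSpace ℝ E] [FiniteDimensional ℝ E] [MeasurableSpace E] [BorelSpace E]
    {a s p : ℝ} (ha : 0 ≤ a) (haE : a < finrank ℝ E) (hs : 0 < s) (hp : 0 ≤ p)
    (hp1 : p ≠ 1)
    (hspE : s * p < finrank ℝ E) (hscale : (finrank ℝ E : ℝ) = a + s * p - s) :
    ∃ c > (0 : ℝ), ∀ x ≠ (0 : E),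
      c * ‖x‖ ^ (-s) = ∫ y, ‖x - y‖ ^ (-a) * (c * ‖y‖ ^ (-s)) ^ p := by
  have hsp : 0 ≤ s * p := mul_nonneg hs.le hp
  have : Nontrivial E :=
    Module.nontrivial_of_finrank_pos (R := ℝ) (by exact_mod_cast hsp.trans_lt hspE)
  obtain ⟨e, he⟩ := exists_norm_eq E zero_le_one
  have he0 : e ≠ 0 := norm_ne_zero_iff.mp (by simp [he])
  set K := ∫ z, ‖e - z‖ ^ (-a) * ‖z‖ ^ (-(s * p))
  have hK : 0 < K := integral_norm_sub_rpow_mul_norm_rpow_pos he0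
    (integrable_norm_sub_rpow_mul_norm_rpow ha hsp haE hspE (by linarith) he0)
  -- `c ^ p * K = c` forces `c = K ^ (1 - p)⁻¹`
  set c := K ^ (1 - p)⁻¹
  have hc : 0 < c := Real.rpow_pos_of_pos hK _
  have hcK : c ^ p * K = c := by
    rw [← Real.rpow_mul hK.le, ← Real.rpow_add_one hK.ne']
    congr 1
    field_simp [sub_ne_zero.mpr hp1.symm]
    ring
  refine ⟨c, hc, fun x hx => ?_⟩
  have hintegrand : ∀ y : E, ‖x - y‖ ^ (-a) * (c * ‖y‖ ^ (-s)) ^ p =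
      c ^ p * (‖x - y‖ ^ (-a) * ‖y‖ ^ (-(s * p))) := fun y => by
    rw [Real.mul_rpow hc.le (by positivity), ← Real.rpow_mul (norm_nonneg y), neg_mul]
    ring
  rw [integral_congr_ae (.of_forall hintegrand), integral_const_mul,
    integral_norm_sub_rpow_mul_norm_rpow_eq _ _ he hx, hscale,
    show a + s * p - s - a - s * p = -s by ring]
  nth_rewrite 1 [← hcK]
  ring

theorem singular_power_solution_critical_general
    (n : ℕ) (α : ℝ) (hα0 : 0 < α) (hαn : α < n) :
    ∃ c > (0 : ℝ), ∀ x ≠ (0 : EuclideanSpace ℝ (Fin n)),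
      c * ‖x‖ ^ (-(((n : ℝ) - α) / 2)) =
        ∫ y : EuclideanSpace ℝ (Fin n),
          ‖x - y‖ ^ (-((n : ℝ) - α)) *
            (c * ‖y‖ ^ (-(((n : ℝ) - α) / 2))) ^ (((n : ℝ) + α) / ((n : ℝ) - α)) := by
  have hnα : 0 < (n : ℝ) - α := by linarith
  have hsp : ((n : ℝ) - α) / 2 * (((n : ℝ) + α) / ((n : ℝ) - α)) = ((n : ℝ) + α) / 2 := by
    field_simp
  refine exists_pos_const_mul_norm_rpow_eq_integral hnα.le ?_ (by positivity) (by positivity)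
    (div_ne_one_of_ne (by linarith)) ?_ ?_ <;>
    simp only [finrank_euclideanSpace_fin, hsp] <;> linarith

/-- The function `u(x) = c |x|^{-(n-α)/2}` with a suitable constant `c > 0` is a
singular solution of the critical integral equation. -/
theorem singular_power_solution_critical
    (n : ℕ) (hn : 0 < n) (α : ℝ) (hα0 : 0 < α) (hαn : α < n) :
    ∃ c > (0 : ℝ), ∀ x ≠ (0 : EuclideanSpace ℝ (Fin n)),
      c * ‖x‖ ^ (-(((n : ℝ) - α) / 2)) =
        ∫ y : EuclideanSpace ℝ (Fin n),
          ‖x - y‖ ^ (-((n : ℝ) - α)) *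
            (c * ‖y‖ ^ (-(((n : ℝ) - α) / 2))) ^ (((n : ℝ) + α) / ((n : ℝ) - α)) :=
  singular_power_solution_critical_general n α hα0 hαn
end

section
/- Let n be a positive integer and 0 < α < n. Suppose u is a positive function on ℝⁿ \ {0}, radially symmetric about the origin and monotone decreasing in |x| (write u(r) for its value at radius r), satisfying u(x) = ∫_{ℝⁿ} |x−y|^{−(n−α)} u(y)^{(n+α)/(n−α)} dy for all x ≠ 0. Then there is a constant C > 0, depending only on n and α, such that for all r > 0, u(r) ≥ C r^{α} u(r)^{(n+α)/(n−α)}; equivalently u(r)^{2α/(n−α)} ≤ (C r^{α})^{−1}. -/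
/-!
Fix `x` with `‖x‖ = r`. On the ball `‖y‖ ≤ r` one has `‖x - y‖ ≤ 2r`, so the kernel is at least
`(2r)^{-(n-α)}`, and by monotonicity `u(y) ≥ u(r)`. Discarding the (nonnegative) rest of the
integral gives `u(r) ≥ |B_r| (2r)^{-(n-α)} u(r)^p = C r^α u(r)^p` with `p = (n+α)/(n-α)` and
`C = 2^{-(n-α)} |B_1|`, by scaling of Lebesgue measure. Dividing by `u(r)` gives the second
bound since `p = 1 + 2α/(n-α)`.
-/

open MeasureTheory Metric

section RieszPotential

variable {E : Type*} [NormedAddCommGroup E]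

theorem two_mul_rpow_neg_le_norm_sub_rpow_neg {x y : E} {r s : ℝ} (hxy : x ≠ y) (hx : ‖x‖ ≤ r)
    (hy : ‖y‖ ≤ r) (hs : 0 ≤ s) : (2 * r) ^ (-s) ≤ ‖x - y‖ ^ (-s) :=
  Real.rpow_le_rpow_of_nonpos (norm_sub_pos_iff.2 hxy) (by linarith [norm_sub_le x y])
    (neg_nonpos.2 hs)

variable [MeasurableSpace E] [BorelSpace E] [ProperSpace E]
  {μ : Measure E} [NullSingletonClass μ] [IsFiniteMeasureOnCompacts μ]

theorem measureReal_closedBall_mul_le_integral_rpow_neg_norm_sub_mul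
    {u : E → ℝ} {x : E} {r s p c : ℝ} (hs : 0 ≤ s) (hp : 0 ≤ p) (hc : 0 ≤ c) (hx : ‖x‖ ≤ r)
    (hu_nonneg : ∀ y ≠ 0, 0 ≤ u y) (hu_ge : ∀ y ≠ 0, ‖y‖ ≤ r → c ≤ u y)
    (hint : Integrable (fun y ↦ ‖x - y‖ ^ (-s) * u y ^ p) μ) :
    μ.real (closedBall 0 r) * ((2 * r) ^ (-s) * c ^ p) ≤
      ∫ y, ‖x - y‖ ^ (-s) * u y ^ p ∂μ := by
  have h0 : ∀ᵐ y ∂μ, y ≠ 0 := ae_iff.2 (by simp)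
  have hx' : ∀ᵐ y ∂μ, y ≠ x := ae_iff.2 (by simp)
  calc μ.real (closedBall 0 r) * ((2 * r) ^ (-s) * c ^ p)
      = ∫ _ in closedBall 0 r, (2 * r) ^ (-s) * c ^ p ∂μ := by
        rw [setIntegral_const, smul_eq_mul]
    _ ≤ ∫ y in closedBall 0 r, ‖x - y‖ ^ (-s) * u y ^ p ∂μ := by
        refine setIntegral_mono_on_ae (integrableOn_const measure_closedBall_lt_top.ne)
          hint.integrableOn measurableSet_closedBall ?_
        filter_upwards [h0, hx'] with y hy0 hyx hyr
        rw [mem_closedBall_zero_iff] at hyr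
        exact mul_le_mul (two_mul_rpow_neg_le_norm_sub_rpow_neg (Ne.symm hyx) hx hyr hs)
          (Real.rpow_le_rpow hc (hu_ge y hy0 hyr) hp) (by positivity) (by positivity)
    _ ≤ ∫ y, ‖x - y‖ ^ (-s) * u y ^ p ∂μ := by
        refine setIntegral_le_integral hint ?_
        filter_upwards [h0] with y hy0
        have := hu_nonneg y hy0
        positivity

end RieszPotential

theorem MeasureTheory.Measure.addHaar_real_closedBall_mul_two_mul_rpow_neg {E : Type*} [NormedAddCommGroup E]
    [NormedSpace ℝ E] [MeasurableSpace E] [BorelSpace E] [FiniteDimensional ℝ E]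
    (μ : Measure E) [μ.IsAddHaarMeasure] {r : ℝ} (hr : 0 < r) (α : ℝ) :
    μ.real (closedBall 0 r) * (2 * r) ^ (-((Module.finrank ℝ E : ℝ) - α)) =
      2 ^ (-((Module.finrank ℝ E : ℝ) - α)) * μ.real (closedBall 0 1) * r ^ α := by
  have hpow : r ^ Module.finrank ℝ E * r ^ (-((Module.finrank ℝ E : ℝ) - α)) = r ^ α := by
    rw [← Real.rpow_natCast, ← Real.rpow_add hr]; ring_nf
  rw [Measure.addHaar_real_closedBall' μ _ hr.le, Real.mul_rpow zero_le_two hr.le]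
  linear_combination (2 ^ (-((Module.finrank ℝ E : ℝ) - α)) * μ.real (closedBall 0 1)) * hpow

theorem rpow_le_inv_of_mul_rpow_one_add_le {a t q : ℝ} (ha : 0 < a) (ht : 0 < t)
    (h : a * t ^ (1 + q) ≤ t) : t ^ q ≤ a⁻¹ := by
  rw [Real.rpow_add ht, Real.rpow_one] at h
  rw [le_inv_comm₀ (by positivity) ha, inv_eq_one_div, le_div_iff₀ (by positivity)]
  nlinarith

/-- For a radially symmetric, monotone decreasing singular solution of the
critical integral equation, one has `u(r) ≥ C r^α u(r)^{(n+α)/(n-α)}` with a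
constant `C > 0` depending only on `n` and `α`. -/
theorem radial_solution_lower_bound
    (n : ℕ) (hn : 0 < n) (α : ℝ) (hα0 : 0 < α) (hαn : α < n) :
    ∃ C > (0 : ℝ),
      ∀ (u : EuclideanSpace ℝ (Fin n) → ℝ) (f : ℝ → ℝ),
        (∀ x ≠ (0 : EuclideanSpace ℝ (Fin n)), 0 < u x) →
        (∀ x ≠ (0 : EuclideanSpace ℝ (Fin n)), u x = f ‖x‖) →
        (∀ r₁ r₂ : ℝ, 0 < r₁ → r₁ ≤ r₂ → f r₂ ≤ f r₁) →
        (∀ x ≠ (0 : EuclideanSpace ℝ (Fin n)),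
          u x = ∫ y : EuclideanSpace ℝ (Fin n),
            ‖x - y‖ ^ (-((n : ℝ) - α)) *
              u y ^ (((n : ℝ) + α) / ((n : ℝ) - α))) →
        ∀ r > (0 : ℝ),
          C * r ^ α * f r ^ (((n : ℝ) + α) / ((n : ℝ) - α)) ≤ f r ∧
          f r ^ (2 * α / ((n : ℝ) - α)) ≤ (C * r ^ α)⁻¹ := by
  set E := EuclideanSpace ℝ (Fin n)
  have : Nontrivial E :=
    Module.nontrivial_of_finrank_pos (R := ℝ) (by rw [finrank_euclideanSpace_fin]; exact hn)
  have hs : (0 : ℝ) < n - α := by linarith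
  have hball : 0 < volume.real (closedBall (0 : E) 1) :=
    ENNReal.toReal_pos (measure_closedBall_pos _ _ one_pos).ne' measure_closedBall_lt_top.ne
  refine ⟨2 ^ (-((n : ℝ) - α)) * volume.real (closedBall (0 : E) 1), by positivity, ?_⟩
  intro u f hu_pos hu_rad hf_anti hu_eq r hr
  obtain ⟨x, hx⟩ := exists_norm_eq E hr.le
  have hx0 : x ≠ 0 := norm_pos_iff.1 (hx ▸ hr)
  have hfr : u x = f r := by rw [hu_rad x hx0, hx]
  have hint := Integrable.of_integral_ne_zero ((hu_eq x hx0) ▸ (hu_pos x hx0).ne')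
  have hmass := measureReal_closedBall_mul_le_integral_rpow_neg_norm_sub_mul hs.le
    (by positivity) (hfr ▸ (hu_pos x hx0).le) hx.le (fun y hy ↦ (hu_pos y hy).le)
    (fun y hy hyr ↦ hu_rad y hy ▸ hf_anti _ _ (norm_pos_iff.2 hy) hyr) hint
  have hscale := Measure.addHaar_real_closedBall_mul_two_mul_rpow_neg (volume : Measure E) hr α
  rw [finrank_euclideanSpace_fin] at hscale
  rw [← mul_assoc, hscale, ← hu_eq x hx0, hfr] at hmass
  have hp : ((n : ℝ) + α) / (n - α) = 1 + 2 * α / (n - α) := by field_simp; ring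
  refine ⟨hmass, rpow_le_inv_of_mul_rpow_one_add_le (by positivity) (hfr ▸ hu_pos x hx0) ?_⟩
  rwa [hp] at hmass
end

section
/- Let n be a positive integer and 0 < α < n. Then there exists a constant c = c(n, α) > 0 such that for every t > 0 and every x₀ ∈ ℝⁿ, the function u(x) = c (t/(t² + |x − x₀|²))^{(n−α)/2} satisfies the critical integral equation u(x) = ∫_{ℝⁿ} |x−y|^{−(n−α)} u(y)^{(n+α)/(n−α)} dy for all x ∈ ℝⁿ. -/
/-!
Write both factors of `|x - y| ^ (-2a) (1 + |y|²) ^ (-b)`, with `a + b = n`, as Gamma integrals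
`Γ(a) z ^ (-a) = ∫₀^∞ s ^ (a - 1) e ^ (-s z) ds`. After Tonelli, the `y`-integral is a product of
two Gaussians, computed by completing the square. Substituting `r = s u` and doing one more Gamma
integral in `s` leaves `∫₀^∞ u ^ (b - n/2 - 1) (1 + |x|² + u) ^ (-n/2) du`, and the scaling
`u = (1 + |x|²) v` pulls out `(1 + |x|²) ^ (b - n) = (1 + |x|²) ^ (-a)`. Translating and dilating
gives the bubbles with arbitrary centre and scale. With `a = (n - α)/2` and `q = (n + α)/(n - α)`,
so that `a q = b`, the equation for `c` reduces to `c ^ q D = c`.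
-/

open MeasureTheory Real Set Filter Module
open scoped ENNReal

lemma rpow_one_div_one_sub_rpow_mul_self {D q : ℝ} (hD : 0 < D) (hq : q ≠ 1) :
    (D ^ (1 / (1 - q))) ^ q * D = D ^ (1 / (1 - q)) := by
  have h1q : 1 - q ≠ 0 := sub_ne_zero.mpr hq.symm
  rw [← rpow_mul hD.le, ← rpow_add_one hD.ne']
  congr 1
  field_simp
  ring

lemma lintegral_Ioi_comp_mul_left (f : ℝ → ℝ≥0∞) {c : ℝ} (hc : 0 < c) :
    ∫⁻ s in Ioi 0, f s = ENNReal.ofReal c * ∫⁻ u in Ioi 0, f (c * u) := by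
  have hemb : MeasurableEmbedding (c * ·) := measurableEmbedding_mulLeft₀ hc.ne'
  have hpre : (c * ·) ⁻¹' Ioi 0 = Ioi 0 := by simp [preimage_const_mul_Ioi₀ _ hc]
  have hmap : ∫⁻ u in Ioi 0, f (c * u) = ENNReal.ofReal c⁻¹ * ∫⁻ s in Ioi 0, f s := by
    rw [← abs_of_pos (inv_pos.mpr hc), ← smul_eq_mul, ← lintegral_smul_measure,
      ← Measure.restrict_smul, ← Real.map_volume_mul_left hc.ne', hemb.restrict_map,
      hemb.lintegral_map, hpre]
  rw [hmap, ← mul_assoc, ← ENNReal.ofReal_mul hc.le, mul_inv_cancel₀ hc.ne', ENNReal.ofReal_one,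
    one_mul]

lemma lintegral_rpow_mul_exp_neg_mul_Ioi {a c : ℝ} (ha : 0 < a) (hc : 0 < c) :
    ∫⁻ s in Ioi 0, ENNReal.ofReal (s ^ (a - 1) * exp (-(c * s)))
      = ENNReal.ofReal (c ^ (-a) * Gamma a) := by
  have hint : IntegrableOn (fun s : ℝ => s ^ (a - 1) * exp (-(c * s))) (Ioi 0) := by
    simpa using integrableOn_rpow_mul_exp_neg_mul_rpow (p := 1) (by linarith) one_pos hc
  rw [← ofReal_integral_eq_lintegral_ofReal hint, integral_rpow_mul_exp_neg_mul_Ioi ha hc,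
    one_div, inv_rpow hc.le, rpow_neg hc.le]
  filter_upwards [self_mem_ae_restrict measurableSet_Ioi] with s (hs : 0 < s)
  positivity

lemma ofReal_gamma_mul_gamma_mul_rpow_neg_mul_rpow_neg_eq_lintegral_Ioi {a b z w : ℝ} (ha : 0 < a)
    (hb : 0 < b) (hz : 0 < z) (hw : 0 < w) :
    ENNReal.ofReal (Gamma a * Gamma b) * ENNReal.ofReal (z ^ (-a) * w ^ (-b))
      = ∫⁻ s in Ioi 0, ∫⁻ r in Ioi 0, ENNReal.ofReal (s ^ (a - 1) * exp (-(z * s)))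
          * ENNReal.ofReal (r ^ (b - 1) * exp (-(w * r))) := by
  have hGa := Gamma_pos_of_pos ha
  have hGb := Gamma_pos_of_pos hb
  rw [lintegral_lintegral_mul (by fun_prop) (by fun_prop), lintegral_rpow_mul_exp_neg_mul_Ioi ha hz,
    lintegral_rpow_mul_exp_neg_mul_Ioi hb hw, ← ENNReal.ofReal_mul (by positivity),
    ← ENNReal.ofReal_mul (by positivity)]
  congr 1
  ring

lemma lintegral_rpow_mul_add_rpow_neg_Ioi (p q : ℝ) {β : ℝ} (hβ : 0 < β) :
    ∫⁻ u in Ioi 0, ENNReal.ofReal (u ^ (p - 1) * (β + u) ^ (-q))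
      = ENNReal.ofReal (β ^ (p - q))
          * ∫⁻ v in Ioi 0, ENNReal.ofReal (v ^ (p - 1) * (1 + v) ^ (-q)) := by
  rw [lintegral_Ioi_comp_mul_left _ hβ, ← lintegral_const_mul' _ _ ENNReal.ofReal_ne_top,
    ← lintegral_const_mul' _ _ ENNReal.ofReal_ne_top]
  refine setLIntegral_congr_fun measurableSet_Ioi fun v (hv : 0 < v) => ?_
  rw [← ENNReal.ofReal_mul hβ.le, ← ENNReal.ofReal_mul (by positivity),
    show β + β * v = β * (1 + v) by ring, mul_rpow hβ.le hv.le, mul_rpow hβ.le (by positivity),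
    show p - q = 1 + (p - 1) + -q by ring, rpow_add hβ, rpow_add hβ, rpow_one]
  congr 1
  ring

lemma integrableOn_rpow_mul_one_add_rpow_neg_Ioi {p q : ℝ} (hp : 0 < p) (hpq : p < q) :
    IntegrableOn (fun v : ℝ => v ^ (p - 1) * (1 + v) ^ (-q)) (Ioi 0) := by
  have hq : 0 < q := hp.trans hpq
  refine mellin_convergent_of_isBigO_scalar (a := q) (b := 0) ?_ ?_ hpq ?_ hp
  · exact (ContinuousOn.rpow_const (by fun_prop) fun v (hv : 0 < v) => Or.inl (by positivity)
      ).locallyIntegrableOn measurableSet_Ioi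
  · refine Asymptotics.IsBigO.of_bound 1 ((eventually_gt_atTop 0).mono fun v hv => ?_)
    rw [norm_of_nonneg (by positivity), norm_of_nonneg (by positivity), one_mul]
    exact rpow_le_rpow_of_nonpos hv (by linarith) (by linarith)
  · refine Asymptotics.IsBigO.of_bound 1 (eventually_nhdsWithin_of_forall fun v (hv : 0 < v) => ?_)
    rw [neg_zero, rpow_zero, norm_one, one_mul, norm_of_nonneg (by positivity)]
    exact rpow_le_one_of_one_le_of_nonpos (by linarith) (by linarith)

lemma lintegral_Ioi_lintegral_Ioi_comp_mul {a b q X : ℝ} (hab : a + b = 2 * q) :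
    ∫⁻ s in Ioi 0, ∫⁻ r in Ioi 0, ENNReal.ofReal (s ^ (a - 1) * r ^ (b - 1) * exp (-r))
        * ENNReal.ofReal ((π / (s + r)) ^ q * exp (-(s * r / (s + r) * X)))
      = ∫⁻ u in Ioi 0, ∫⁻ s in Ioi 0, ENNReal.ofReal (π ^ q * u ^ (b - 1) * (1 + u) ^ (-q))
        * ENNReal.ofReal (s ^ (q - 1) * exp (-(u * (1 + X + u) / (1 + u) * s))) := by
  refine Eq.trans ?_ (lintegral_lintegral_swap (by fun_prop))
  refine setLIntegral_congr_fun measurableSet_Ioi fun s (hs : 0 < s) => ?_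
  rw [lintegral_Ioi_comp_mul_left _ hs, ← lintegral_const_mul' _ _ ENNReal.ofReal_ne_top]
  refine setLIntegral_congr_fun measurableSet_Ioi fun u (hu : 0 < u) => ?_
  have h1u : 0 < 1 + u := by linarith
  have hpow : s * s ^ (a - 1) * s ^ (b - 1) * s ^ (-q) = s ^ (q - 1) := by
    rw [show q - 1 = 1 + (a - 1) + (b - 1) + -q by linarith, rpow_add hs, rpow_add hs,
      rpow_add hs, rpow_one]
  have hpi : (π / (s + s * u)) ^ q = π ^ q * (s ^ (-q) * (1 + u) ^ (-q)) := by
    rw [show s + s * u = s * (1 + u) by ring, div_rpow pi_nonneg (by positivity),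
      mul_rpow hs.le h1u.le, div_eq_mul_inv, mul_inv, ← rpow_neg hs.le, ← rpow_neg h1u.le]
  have hexp : exp (-(s * u)) * exp (-(s * (s * u) / (s + s * u) * X))
      = exp (-(u * (1 + X + u) / (1 + u) * s)) := by
    rw [← exp_add]
    congr 1
    field_simp
    ring
  rw [← ENNReal.ofReal_mul (by positivity), ← ENNReal.ofReal_mul hs.le,
    ← ENNReal.ofReal_mul (by positivity)]
  congr 1
  rw [mul_rpow hs.le hu.le, hpi]
  calc _ = (s * s ^ (a - 1) * s ^ (b - 1) * s ^ (-q)) * (π ^ q * u ^ (b - 1) * (1 + u) ^ (-q))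
        * (exp (-(s * u)) * exp (-(s * (s * u) / (s + s * u) * X))) := by ring
    _ = _ := by rw [hpow, hexp]; ring

lemma lintegral_Ioi_lintegral_Ioi_gamma {b q X : ℝ} (hq : 0 < q) (hX : 0 ≤ X) :
    ∫⁻ u in Ioi 0, ∫⁻ s in Ioi 0, ENNReal.ofReal (π ^ q * u ^ (b - 1) * (1 + u) ^ (-q))
        * ENNReal.ofReal (s ^ (q - 1) * exp (-(u * (1 + X + u) / (1 + u) * s)))
      = ENNReal.ofReal (π ^ q * Gamma q)
          * ∫⁻ u in Ioi 0, ENNReal.ofReal (u ^ (b - q - 1) * (1 + X + u) ^ (-q)) := by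
  rw [← lintegral_const_mul' _ _ ENNReal.ofReal_ne_top]
  refine setLIntegral_congr_fun measurableSet_Ioi fun u (hu : 0 < u) => ?_
  have h1u : 0 < 1 + u := by linarith
  have h1Xu : 0 < 1 + X + u := by linarith
  rw [lintegral_const_mul' _ _ ENNReal.ofReal_ne_top,
    lintegral_rpow_mul_exp_neg_mul_Ioi hq (by positivity), ← ENNReal.ofReal_mul (by positivity),
    ← ENNReal.ofReal_mul (by positivity)]
  congr 1
  rw [div_rpow (by positivity) h1u.le, mul_rpow hu.le h1Xu.le]
  calc _ = π ^ q * Gamma q * (u ^ (b - 1) * u ^ (-q)) * (1 + X + u) ^ (-q)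
        * ((1 + u) ^ (-q) / (1 + u) ^ (-q)) := by ring
    _ = _ := by
      rw [div_self (by positivity), ← rpow_add hu, show b - 1 + -q = b - q - 1 by ring]
      ring

lemma div_sq_add_norm_smul_sq_rpow {E : Type*} [NormedAddCommGroup E] [NormedSpace ℝ E] {t : ℝ}
    (ht : 0 < t) (z : E) (e : ℝ) :
    (t / (t ^ 2 + ‖t • z‖ ^ 2)) ^ e = t ^ (-e) * (1 + ‖z‖ ^ 2) ^ (-e) := by
  have h1z : 0 < 1 + ‖z‖ ^ 2 := by positivity
  rw [norm_smul, norm_of_nonneg ht.le, show t / (t ^ 2 + (t * ‖z‖) ^ 2) = t⁻¹ * (1 + ‖z‖ ^ 2)⁻¹ by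
      field_simp, mul_rpow (by positivity) (by positivity), inv_rpow ht.le, inv_rpow h1z.le,
    rpow_neg ht.le, rpow_neg h1z.le]

section InnerProductSpace

variable {V : Type*} [NormedAddCommGroup V] [InnerProductSpace ℝ V]

lemma mul_norm_sub_sq_add_mul_norm_sq {s r : ℝ} (hsr : s + r ≠ 0) (x y : V) :
    s * ‖x - y‖ ^ 2 + r * ‖y‖ ^ 2
      = (s + r) * ‖y - (s / (s + r)) • x‖ ^ 2 + s * r / (s + r) * ‖x‖ ^ 2 := by
  rw [norm_sub_sq_real, norm_sub_sq_real, real_inner_smul_right, norm_smul, real_inner_comm,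
    mul_pow, Real.norm_eq_abs, sq_abs]
  field_simp
  ring

variable [FiniteDimensional ℝ V] [MeasurableSpace V] [BorelSpace V]

lemma lintegral_exp_neg_mul_norm_sub_sq {b : ℝ} (hb : 0 < b) (m : V) :
    ∫⁻ y, ENNReal.ofReal (exp (-(b * ‖y - m‖ ^ 2)))
      = ENNReal.ofReal ((π / b) ^ (finrank ℝ V / 2 : ℝ)) := by
  have hint : ∫ y : V, exp (-b * ‖y‖ ^ 2) = (π / b) ^ (finrank ℝ V / 2 : ℝ) :=
    GaussianFourier.integral_rexp_neg_mul_sq_norm hb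
  rw [← lintegral_add_right_eq_self _ m, ← hint,
    ofReal_integral_eq_lintegral_ofReal (.of_integral_ne_zero (by rw [hint]; positivity))
      (.of_forall fun y => (exp_pos _).le)]
  simp only [add_sub_cancel_right, neg_mul]

lemma lintegral_exp_neg_mul_norm_sub_sq_mul_exp_neg_mul_norm_sq {s r : ℝ} (hs : 0 < s)
    (hr : 0 < r) (x : V) :
    ∫⁻ y, ENNReal.ofReal (exp (-(s * ‖x - y‖ ^ 2)) * exp (-(r * ‖y‖ ^ 2)))
      = ENNReal.ofReal ((π / (s + r)) ^ (finrank ℝ V / 2 : ℝ)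
          * exp (-(s * r / (s + r) * ‖x‖ ^ 2))) := by
  have hsr : 0 < s + r := by linarith
  have hsplit : ∀ y : V, exp (-(s * ‖x - y‖ ^ 2)) * exp (-(r * ‖y‖ ^ 2))
      = exp (-(s * r / (s + r) * ‖x‖ ^ 2)) * exp (-((s + r) * ‖y - (s / (s + r)) • x‖ ^ 2)) := by
    intro y
    rw [← exp_add, ← exp_add, ← neg_add, ← neg_add, add_comm (s * r / (s + r) * _),
      ← mul_norm_sub_sq_add_mul_norm_sq hsr.ne']
  simp_rw [hsplit, ENNReal.ofReal_mul (exp_pos _).le]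
  rw [lintegral_const_mul' _ _ ENNReal.ofReal_ne_top, lintegral_exp_neg_mul_norm_sub_sq hsr,
    ← ENNReal.ofReal_mul (exp_pos _).le, mul_comm]

lemma ofReal_gamma_mul_lintegral_norm_sub_rpow_mul_one_add_sq_rpow_eq_lintegral_Ioi [Nontrivial V]
    {a b : ℝ} (ha : 0 < a) (hb : 0 < b) (x : V) :
    ENNReal.ofReal (Gamma a * Gamma b)
        * ∫⁻ y, ENNReal.ofReal (‖x - y‖ ^ (-(2 * a)) * (1 + ‖y‖ ^ 2) ^ (-b))
      = ∫⁻ s in Ioi 0, ∫⁻ r in Ioi 0, ENNReal.ofReal (s ^ (a - 1) * r ^ (b - 1) * exp (-r))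
          * ENNReal.ofReal ((π / (s + r)) ^ (finrank ℝ V / 2 : ℝ)
            * exp (-(s * r / (s + r) * ‖x‖ ^ 2))) := by
  have hsub : ∀ᵐ y : V, ENNReal.ofReal (Gamma a * Gamma b)
        * ENNReal.ofReal (‖x - y‖ ^ (-(2 * a)) * (1 + ‖y‖ ^ 2) ^ (-b))
      = ∫⁻ s in Ioi 0, ∫⁻ r in Ioi 0, ENNReal.ofReal (s ^ (a - 1) * exp (-(‖x - y‖ ^ 2 * s)))
          * ENNReal.ofReal (r ^ (b - 1) * exp (-((1 + ‖y‖ ^ 2) * r))) := by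
    filter_upwards [volume.ae_ne x] with y hy
    have hxy : 0 < ‖x - y‖ := norm_pos_iff.mpr (sub_ne_zero.mpr hy.symm)
    rw [← ofReal_gamma_mul_gamma_mul_rpow_neg_mul_rpow_neg_eq_lintegral_Ioi ha hb (by positivity)
      (by positivity), ← rpow_natCast ‖x - y‖ 2, ← rpow_mul hxy.le, Nat.cast_ofNat, mul_neg]
  have hheat : ∀ s > 0, ∀ r > 0, ∫⁻ y, ENNReal.ofReal (s ^ (a - 1) * exp (-(‖x - y‖ ^ 2 * s)))
        * ENNReal.ofReal (r ^ (b - 1) * exp (-((1 + ‖y‖ ^ 2) * r)))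
      = ENNReal.ofReal (s ^ (a - 1) * r ^ (b - 1) * exp (-r))
          * ENNReal.ofReal ((π / (s + r)) ^ (finrank ℝ V / 2 : ℝ)
            * exp (-(s * r / (s + r) * ‖x‖ ^ 2))) := by
    intro s hs r hr
    rw [← lintegral_exp_neg_mul_norm_sub_sq_mul_exp_neg_mul_norm_sq hs hr,
      ← lintegral_const_mul' _ _ ENNReal.ofReal_ne_top]
    refine lintegral_congr fun y => ?_
    rw [← ENNReal.ofReal_mul (by positivity), ← ENNReal.ofReal_mul (by positivity),
      show -((1 + ‖y‖ ^ 2) * r) = -r + -(r * ‖y‖ ^ 2) by ring, exp_add, mul_comm (‖x - y‖ ^ 2)]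
    congr 1
    ring
  rw [← lintegral_const_mul' _ _ ENNReal.ofReal_ne_top, lintegral_congr_ae hsub,
    lintegral_lintegral_swap (by fun_prop)]
  refine setLIntegral_congr_fun measurableSet_Ioi fun s (hs : 0 < s) => ?_
  rw [lintegral_lintegral_swap (by fun_prop)]
  exact setLIntegral_congr_fun measurableSet_Ioi fun r (hr : 0 < r) => hheat s hs r hr

lemma ofReal_gamma_mul_lintegral_norm_sub_rpow_mul_one_add_sq_rpow [Nontrivial V] {a b : ℝ}
    (ha : 0 < a) (hb : 0 < b) (hab : a + b = finrank ℝ V) (x : V) :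
    ENNReal.ofReal (Gamma a * Gamma b)
        * ∫⁻ y, ENNReal.ofReal (‖x - y‖ ^ (-(2 * a)) * (1 + ‖y‖ ^ 2) ^ (-b))
      = ENNReal.ofReal (π ^ (finrank ℝ V / 2 : ℝ) * Gamma (finrank ℝ V / 2))
          * (ENNReal.ofReal ((1 + ‖x‖ ^ 2) ^ (-a))
            * ∫⁻ v in Ioi 0, ENNReal.ofReal
                (v ^ (b - finrank ℝ V / 2 - 1) * (1 + v) ^ (-(finrank ℝ V / 2 : ℝ)))) := by
  have hd : (0 : ℝ) < finrank ℝ V / 2 := by have := finrank_pos (R := ℝ) (M := V); positivity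
  rw [ofReal_gamma_mul_lintegral_norm_sub_rpow_mul_one_add_sq_rpow_eq_lintegral_Ioi ha hb,
    lintegral_Ioi_lintegral_Ioi_comp_mul (by linarith),
    lintegral_Ioi_lintegral_Ioi_gamma hd (by positivity),
    lintegral_rpow_mul_add_rpow_neg_Ioi _ _ (by positivity)]
  congr 4
  linarith

noncomputable def bubbleConst (d a b : ℝ) : ℝ :=
  π ^ (d / 2) * Gamma (d / 2) / (Gamma a * Gamma b)
    * ∫ v in Ioi (0 : ℝ), v ^ (b - d / 2 - 1) * (1 + v) ^ (-(d / 2))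

lemma bubbleConst_pos {d a b : ℝ} (ha : 0 < a) (hb : d / 2 < b) (hab : a + b = d) :
    0 < bubbleConst d a b := by
  have hd : 0 < d / 2 := by linarith
  have hf : ∀ v ∈ Ioi (0 : ℝ), 0 < v ^ (b - d / 2 - 1) * (1 + v) ^ (-(d / 2)) :=
    fun v (hv : 0 < v) => by positivity
  have hK : 0 < ∫ v in Ioi (0 : ℝ), v ^ (b - d / 2 - 1) * (1 + v) ^ (-(d / 2)) := by
    rw [setIntegral_pos_iff_support_of_nonneg_ae
      (ae_restrict_of_forall_mem measurableSet_Ioi fun v hv => (hf v hv).le)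
      (integrableOn_rpow_mul_one_add_rpow_neg_Ioi (by linarith) (by linarith))]
    refine lt_of_lt_of_le ?_ (measure_mono fun v hv => ⟨(hf v hv).ne', hv⟩)
    simp
  have := Gamma_pos_of_pos ha
  have := Gamma_pos_of_pos (hd.trans hb)
  have := Gamma_pos_of_pos hd
  unfold bubbleConst
  positivity

theorem integral_norm_sub_rpow_mul_one_add_sq_rpow {a b : ℝ} (ha : 0 < a)
    (hb : finrank ℝ V / 2 < b) (hab : a + b = finrank ℝ V) (x : V) :
    ∫ y, ‖x - y‖ ^ (-(2 * a)) * (1 + ‖y‖ ^ 2) ^ (-b)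
      = bubbleConst (finrank ℝ V) a b * (1 + ‖x‖ ^ 2) ^ (-a) := by
  have hd : (0 : ℝ) < finrank ℝ V := by linarith
  have : Nontrivial V := Module.nontrivial_of_finrank_pos (R := ℝ) (by exact_mod_cast hd)
  have hGa := Gamma_pos_of_pos ha
  have hGb := Gamma_pos_of_pos (show 0 < b by linarith)
  have hD := bubbleConst_pos ha hb hab
  have hK := integrableOn_rpow_mul_one_add_rpow_neg_Ioi (p := b - finrank ℝ V / 2)
    (q := finrank ℝ V / 2) (by linarith) (by linarith)
  have hlint : ENNReal.ofReal (Gamma a * Gamma b)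
        * ∫⁻ y, ENNReal.ofReal (‖x - y‖ ^ (-(2 * a)) * (1 + ‖y‖ ^ 2) ^ (-b))
      = ENNReal.ofReal (Gamma a * Gamma b)
        * ENNReal.ofReal (bubbleConst (finrank ℝ V) a b * (1 + ‖x‖ ^ 2) ^ (-a)) := by
    rw [ofReal_gamma_mul_lintegral_norm_sub_rpow_mul_one_add_sq_rpow ha (by linarith) hab,
      ← ofReal_integral_eq_lintegral_ofReal hK
        (ae_restrict_of_forall_mem measurableSet_Ioi fun v (hv : 0 < v) => by positivity),
      ← ENNReal.ofReal_mul (by positivity), ← ENNReal.ofReal_mul (by positivity),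
      ← ENNReal.ofReal_mul (by positivity)]
    congr 1
    unfold bubbleConst
    field_simp
  rw [integral_eq_lintegral_of_nonneg_ae (.of_forall fun y => by positivity) (by fun_prop),
    (ENNReal.mul_right_inj (by simp; positivity) ENNReal.ofReal_ne_top).mp hlint,
    ENNReal.toReal_ofReal (by positivity)]

theorem integral_norm_sub_rpow_mul_bubble_rpow {a b : ℝ} (ha : 0 < a)
    (hb : finrank ℝ V / 2 < b) (hab : a + b = finrank ℝ V) {t : ℝ} (ht : 0 < t) (x₀ x : V) :
    ∫ y, ‖x - y‖ ^ (-(2 * a)) * (t / (t ^ 2 + ‖y - x₀‖ ^ 2)) ^ b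
      = bubbleConst (finrank ℝ V) a b * (t / (t ^ 2 + ‖x - x₀‖ ^ 2)) ^ a := by
  set w := t⁻¹ • (x - x₀)
  have hw : x - x₀ = t • w := (smul_inv_smul₀ ht.ne' _).symm
  have hpt : ∀ z : V, ‖x - (x₀ + t • z)‖ ^ (-(2 * a)) * (t / (t ^ 2 + ‖x₀ + t • z - x₀‖ ^ 2)) ^ b
      = t ^ (-(2 * a)) * t ^ (-b) * (‖w - z‖ ^ (-(2 * a)) * (1 + ‖z‖ ^ 2) ^ (-b)) := by
    intro z
    rw [show x - (x₀ + t • z) = t • (w - z) by rw [smul_sub, ← hw]; abel, add_sub_cancel_left,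
      div_sq_add_norm_smul_sq_rpow ht, norm_smul, norm_of_nonneg ht.le,
      mul_rpow ht.le (by positivity)]
    ring
  have htpow : (t ^ finrank ℝ V : ℝ) * (t ^ (-(2 * a)) * t ^ (-b)) = t ^ (-a) := by
    rw [← rpow_natCast, ← rpow_add ht, ← rpow_add ht]
    congr 1
    linarith
  calc ∫ y, ‖x - y‖ ^ (-(2 * a)) * (t / (t ^ 2 + ‖y - x₀‖ ^ 2)) ^ b
      = ∫ z, ‖x - (x₀ + z)‖ ^ (-(2 * a)) * (t / (t ^ 2 + ‖x₀ + z - x₀‖ ^ 2)) ^ b :=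
        (integral_add_left_eq_self _ x₀).symm
    _ = t ^ finrank ℝ V * ∫ z, ‖x - (x₀ + t • z)‖ ^ (-(2 * a))
          * (t / (t ^ 2 + ‖x₀ + t • z - x₀‖ ^ 2)) ^ b := by
        rw [Measure.integral_comp_smul volume (fun z => ‖x - (x₀ + z)‖ ^ (-(2 * a))
          * (t / (t ^ 2 + ‖x₀ + z - x₀‖ ^ 2)) ^ b), abs_of_pos (by positivity), smul_eq_mul,
          mul_inv_cancel_left₀ (by positivity)]
    _ = t ^ (-a) * (bubbleConst (finrank ℝ V) a b * (1 + ‖w‖ ^ 2) ^ (-a)) := by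
        simp_rw [hpt]
        rw [integral_const_mul, integral_norm_sub_rpow_mul_one_add_sq_rpow ha hb hab, ← mul_assoc,
          htpow]
    _ = _ := by rw [hw, div_sq_add_norm_smul_sq_rpow ht]; ring

theorem standard_bubble_solution_general
    (n : ℕ) (α : ℝ) (hα0 : 0 < α) (hαn : α < n) :
    ∃ c > (0 : ℝ), ∀ t > (0 : ℝ), ∀ x₀ x : EuclideanSpace ℝ (Fin n),
      c * (t / (t ^ 2 + ‖x - x₀‖ ^ 2)) ^ (((n : ℝ) - α) / 2) =
        ∫ y : EuclideanSpace ℝ (Fin n),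
          ‖x - y‖ ^ (-((n : ℝ) - α)) *
            (c * (t / (t ^ 2 + ‖y - x₀‖ ^ 2)) ^ (((n : ℝ) - α) / 2)) ^
              (((n : ℝ) + α) / ((n : ℝ) - α)) := by
  set a := ((n : ℝ) - α) / 2 with ha_def
  set b := ((n : ℝ) + α) / 2 with hb_def
  set q := ((n : ℝ) + α) / ((n : ℝ) - α) with hq_def
  have hdim : (finrank ℝ (EuclideanSpace ℝ (Fin n)) : ℝ) = n := by rw [finrank_euclideanSpace_fin]
  have hαn' : 0 < (n : ℝ) - α := by linarith
  have ha : 0 < a := by positivity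
  have hb : (finrank ℝ (EuclideanSpace ℝ (Fin n)) : ℝ) / 2 < b := by rw [hdim, hb_def]; linarith
  have hab : a + b = finrank ℝ (EuclideanSpace ℝ (Fin n)) := by rw [hdim, ha_def, hb_def]; ring
  have hbq : a * q = b := by rw [ha_def, hb_def, hq_def]; field_simp
  have hq : q ≠ 1 := by rw [hq_def, ne_eq, div_eq_one_iff_eq hαn'.ne']; linarith
  set D := bubbleConst (finrank ℝ (EuclideanSpace ℝ (Fin n))) a b
  have hD : 0 < D := bubbleConst_pos ha hb hab
  set c := D ^ (1 / (1 - q))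
  refine ⟨c, rpow_pos_of_pos hD _, fun t ht x₀ x => ?_⟩
  have hpt : ∀ y : EuclideanSpace ℝ (Fin n),
      ‖x - y‖ ^ (-((n : ℝ) - α)) * (c * (t / (t ^ 2 + ‖y - x₀‖ ^ 2)) ^ a) ^ q
        = c ^ q * (‖x - y‖ ^ (-(2 * a)) * (t / (t ^ 2 + ‖y - x₀‖ ^ 2)) ^ b) := by
    intro y
    rw [mul_rpow (by positivity) (by positivity), ← rpow_mul (x := t / _) (by positivity), hbq,
      show -((n : ℝ) - α) = -(2 * a) by ring]
    ring
  simp_rw [hpt]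
  rw [integral_const_mul, integral_norm_sub_rpow_mul_bubble_rpow ha hb hab ht, ← mul_assoc,
    rpow_one_div_one_sub_rpow_mul_self hD hq]

/-- There is a constant `c = c(n, α) > 0` such that for every `t > 0` and
`x₀ ∈ ℝⁿ`, the function `u(x) = c (t/(t² + |x - x₀|²))^{(n-α)/2}` solves the
critical integral equation. -/
theorem standard_bubble_solution
    (n : ℕ) (hn : 0 < n) (α : ℝ) (hα0 : 0 < α) (hαn : α < n) :
    ∃ c > (0 : ℝ), ∀ t > (0 : ℝ), ∀ x₀ x : EuclideanSpace ℝ (Fin n),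
      c * (t / (t ^ 2 + ‖x - x₀‖ ^ 2)) ^ (((n : ℝ) - α) / 2) =
        ∫ y : EuclideanSpace ℝ (Fin n),
          ‖x - y‖ ^ (-((n : ℝ) - α)) *
            (c * (t / (t ^ 2 + ‖y - x₀‖ ^ 2)) ^ (((n : ℝ) - α) / 2)) ^
              (((n : ℝ) + α) / ((n : ℝ) - α)) :=
  standard_bubble_solution_general n α hα0 hαn
end InnerProductSpace
end
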